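/- arXiv:0711.4924 — 3 statements merged into one kernel-verified Lean document; each statement's English description precedes it below -/
import Mathlib

section
/- Let I be a minimization problem instance with price list p_1,...,p_N (nonnegative integers), let O be an optimal solution (a subset of indices) with cost p(O) = Σ_{i∈O} p_i, and let u = max_{i∈O} p_i > 0. Let t satisfy t/2 ≤ u ≤ t, set K = t·ε/N for 0 < ε < 1, and let p'_i = ⌈p_i/K⌉. If S is any subset with Σ_{i∈S} p'_i ≤ Σ_{i∈O} p'_i, then Σ_{i∈S} p_i ≤ (1+2ε)·Σ_{i∈O} p_i. -/
open Finset in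
/-- Core approximation guarantee of the FPTAS: if u is the largest price used
in the optimal solution O, t/2 ≤ u ≤ t, K = tε/N, and S is at least as good as
O under the scaled prices p'_i = ⌈p_i/K⌉, then p(S) ≤ (1+2ε)·p(O). -/
theorem fptas_approximation_guarantee (N : ℕ) (hN : 0 < N)
    (p : Fin N → ℕ) (O S : Finset (Fin N))
    (u : ℕ) (hu_pos : 0 < u)
    (hu_mem : ∃ i ∈ O, p i = u) (hu_max : ∀ i ∈ O, p i ≤ u)
    (t ε K : ℝ) (ht₁ : t / 2 ≤ u) (ht₂ : (u : ℝ) ≤ t)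
    (hε : 0 < ε) (hε' : ε < 1) (hK : K = t * ε / N)
    (hS : (∑ i ∈ S, (⌈(p i : ℝ) / K⌉ : ℤ)) ≤ ∑ i ∈ O, (⌈(p i : ℝ) / K⌉ : ℤ)) :
    (∑ i ∈ S, (p i : ℝ)) ≤ (1 + 2 * ε) * ∑ i ∈ O, (p i : ℝ) := by
  have ht0 : (0 : ℝ) < t := lt_of_lt_of_le (by exact_mod_cast hu_pos) ht₂
  have hK0 : 0 < K := by
    rw [hK]; positivity
  obtain ⟨i₀, hi₀, hpi₀⟩ := hu_mem
  have huO : (u : ℝ) ≤ ∑ i ∈ O, (p i : ℝ) := by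
    rw [← hpi₀]
    exact Finset.single_le_sum (f := fun i => (p i : ℝ)) (fun i _ => by positivity) hi₀
  have step1 : (∑ i ∈ S, (p i : ℝ)) ≤ K * ∑ i ∈ S, (⌈(p i : ℝ) / K⌉ : ℝ) := by
    rw [Finset.mul_sum]
    apply Finset.sum_le_sum
    intro i _
    have := Int.le_ceil ((p i : ℝ) / K)
    calc (p i : ℝ) = K * ((p i : ℝ) / K) := by field_simp
      _ ≤ K * (⌈(p i : ℝ) / K⌉ : ℝ) := mul_le_mul_of_nonneg_left this hK0.le
  have step2 : K * (∑ i ∈ S, (⌈(p i : ℝ) / K⌉ : ℝ)) ≤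
      K * ∑ i ∈ O, (⌈(p i : ℝ) / K⌉ : ℝ) := by
    apply mul_le_mul_of_nonneg_left _ hK0.le
    exact_mod_cast hS
  have step3 : K * (∑ i ∈ O, (⌈(p i : ℝ) / K⌉ : ℝ)) ≤
      (∑ i ∈ O, (p i : ℝ)) + N * K := by
    rw [Finset.mul_sum]
    calc (∑ i ∈ O, K * (⌈(p i : ℝ) / K⌉ : ℝ)) ≤ ∑ i ∈ O, ((p i : ℝ) + K) := by
          apply Finset.sum_le_sum
          intro i _
          have h1 : (⌈(p i : ℝ) / K⌉ : ℝ) < (p i : ℝ) / K + 1 := Int.ceil_lt_add_one _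
          have h2 := mul_le_mul_of_nonneg_left h1.le hK0.le
          calc K * (⌈(p i : ℝ) / K⌉ : ℝ) ≤ K * ((p i : ℝ) / K + 1) := h2
            _ = (p i : ℝ) + K := by field_simp
      _ = (∑ i ∈ O, (p i : ℝ)) + O.card * K := by
          rw [Finset.sum_add_distrib, Finset.sum_const, nsmul_eq_mul]
      _ ≤ (∑ i ∈ O, (p i : ℝ)) + N * K := by
          have hc : (O.card : ℝ) ≤ N := by
            exact_mod_cast (Finset.card_le_card (Finset.subset_univ O)).trans_eq
              (Finset.card_univ.trans (Fintype.card_fin N))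
          nlinarith
  have hNK : (N : ℝ) * K = t * ε := by
    rw [hK]; field_simp
  have htu : t ≤ 2 * u := by linarith
  have key : (∑ i ∈ S, (p i : ℝ)) ≤ (∑ i ∈ O, (p i : ℝ)) + t * ε := by
    calc (∑ i ∈ S, (p i : ℝ)) ≤ K * ∑ i ∈ S, (⌈(p i : ℝ) / K⌉ : ℝ) := step1
      _ ≤ K * ∑ i ∈ O, (⌈(p i : ℝ) / K⌉ : ℝ) := step2
      _ ≤ (∑ i ∈ O, (p i : ℝ)) + N * K := step3
      _ = (∑ i ∈ O, (p i : ℝ)) + t * ε := by rw [hNK]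
  nlinarith
end

section
/- If plurality-weighted-negative-bribery is NP-hard, then (1,1)-weighted-bribery is NP-hard: given an instance of the former with budget B, setting all unit-bribery prices to 1 except those that move a point onto the distinguished candidate p (which get price B+1) yields a (1,1)-weighted-bribery instance with budget B that is a yes-instance iff the original is a yes-instance. -/
open Finset

/-- Weighted plurality score of candidate `c` under votes `vote` with weights `w`. -/
def pluralityScore {n m : ℕ} (w : Fin n → ℕ) (vote : Fin n → Fin m) (c : Fin m) : ℕ :=
  ∑ v ∈ univ.filter (fun v => vote v = c), w v

/-- Candidate `c` is a winner iff no candidate has strictly higher weighted score. -/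
def isWinner {n m : ℕ} (w : Fin n → ℕ) (vote : Fin n → Fin m) (c : Fin m) : Prop :=
  ∀ d : Fin m, pluralityScore w vote d ≤ pluralityScore w vote c

/-- Correctness of the reduction from plurality-weighted-negative-bribery to
(1,1)-weighted-bribery: with unit-bribery prices equal to 1 except for moves
onto the distinguished candidate p, which cost B+1 (and 0 for not changing a
vote), and budget B, the nonuniform bribery instance is a yes-instance iff the
negative-bribery instance is.  (This is the reduction establishing that
NP-hardness of the former implies NP-hardness of the latter.) -/
theorem negative_bribery_reduces_to_nonuniform_bribery
    {n m : ℕ} (w : Fin n → ℕ) (vote : Fin n → Fin m) (pc : Fin m) (B : ℕ) :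
    ((∃ (S : Finset (Fin n)) (newvote : Fin n → Fin m),
        S.card ≤ B ∧
        (∀ i, i ∉ S → newvote i = vote i) ∧
        (∀ i ∈ S, newvote i ≠ pc) ∧
        isWinner w newvote pc)
      ↔
      (∃ newvote : Fin n → Fin m,
        (∑ i, (if newvote i = vote i then 0
               else if newvote i = pc then B + 1 else 1)) ≤ B ∧
        isWinner w newvote pc)) := by
  constructor
  · rintro ⟨S, nv, hcard, hout, hS, hwin⟩
    refine ⟨nv, ?_, hwin⟩
    calc (∑ i, (if nv i = vote i then 0 else if nv i = pc then B + 1 else 1))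
        ≤ ∑ i, (if i ∈ S then 1 else 0) := by
          apply Finset.sum_le_sum
          intro i _
          by_cases hi : i ∈ S
          · simp only [hi, if_true]
            by_cases h1 : nv i = vote i
            · simp [h1]
            · simp [h1, hS i hi]
          · simp [hi, hout i hi]
      _ = S.card := by simp
      _ ≤ B := hcard
  · rintro ⟨nv, hcost, hwin⟩
    refine ⟨univ.filter (fun i => nv i ≠ vote i), nv, ?_, ?_, ?_, hwin⟩
    · have : ((univ.filter (fun i => nv i ≠ vote i)).card : ℕ)
          = ∑ i ∈ univ.filter (fun i => nv i ≠ vote i), 1 := by simp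
      rw [this]
      refine le_trans (le_trans (Finset.sum_le_sum ?_)
        (Finset.sum_le_sum_of_subset (Finset.filter_subset _ _))) hcost
      intro i hi
      simp only [Finset.mem_filter] at hi
      simp only [hi.2, if_false]
      by_cases h2 : nv i = pc <;> simp [h2]
    · intro i hi
      simp only [Finset.mem_filter, Finset.mem_univ, true_and, not_not] at hi
      exact hi
    · intro i hi hpc
      simp only [Finset.mem_filter, Finset.mem_univ, true_and] at hi
      have : B + 1 ≤ ∑ i, (if nv i = vote i then 0
               else if nv i = pc then B + 1 else 1) := by
        have := Finset.single_le_sum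
          (f := fun i => (if nv i = vote i then 0
               else if nv i = pc then B + 1 else 1))
          (fun i _ => Nat.zero_le _) (Finset.mem_univ i)
        rwa [if_neg hi, if_pos hpc] at this
      omega
end

section
/- Let f be a flow of value k·n in the bribery network for a (k,b)-election with n voters and m candidates, where the source sends to node c_{ℓi} exactly the number of points voter v_ℓ assigns to candidate c_i, edges c_{ℓi} → c'_{ℓj} have capacity k, edges c'_{ℓi} → f_i have capacity b, and edges f_i → t have capacity K. Then the induced post-bribery point assignment (voter v_ℓ gives candidate c_j exactly Σ_i f(c_{ℓi}, c'_{ℓj}) points) is a legal (k,b)-election ballot profile in which every candidate receives at most K total points. -/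
open Finset

/-- Nodes of the bribery flow network: source, sink, pre-bribery nodes c_{ℓi},
post-bribery nodes c'_{ℓi}, and candidate accumulator nodes f_i. -/
inductive BNode (n m : ℕ) where
  | s | t
  | c (ℓ : Fin n) (i : Fin m)
  | c' (ℓ : Fin n) (i : Fin m)
  | f (i : Fin m)
  deriving DecidableEq, Fintype

/-- Capacities of the bribery network: s → c_{ℓi} has capacity x ℓ i (the
pre-bribery points), c_{ℓi} → c'_{ℓj} has capacity k, c'_{ℓi} → f_i has
capacity b, f_i → t has capacity K; everything else 0. -/
def cpc (n m k b K : ℕ) (x : Fin n → Fin m → ℕ) : BNode n m → BNode n m → ℕ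
  | .s, .c ℓ i => x ℓ i
  | .c ℓ _, .c' ℓ' _ => if ℓ = ℓ' then k else 0
  | .c' _ i, .f i' => if i = i' then b else 0
  | .f _, .t => K
  | _, _ => 0

/-- `f` is a flow for capacity function `c`: capacity constraints, skew
symmetry, and conservation at all nodes other than the source and the sink. -/
def IsFlow {n m : ℕ} (c : BNode n m → BNode n m → ℕ) (f : BNode n m → BNode n m → ℤ) : Prop :=
  (∀ u v, f u v ≤ (c u v : ℤ)) ∧
  (∀ u v, f u v = - f v u) ∧
  (∀ u : BNode n m, u ≠ .s → u ≠ .t → ∑ v, f u v = 0)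

def bEquiv (n m : ℕ) :
    (Unit ⊕ Unit ⊕ (Fin n × Fin m) ⊕ (Fin n × Fin m) ⊕ Fin m) ≃ BNode n m where
  toFun x := match x with
    | .inl _ => .s
    | .inr (.inl _) => .t
    | .inr (.inr (.inl (ℓ, i))) => .c ℓ i
    | .inr (.inr (.inr (.inl (ℓ, i)))) => .c' ℓ i
    | .inr (.inr (.inr (.inr i))) => .f i
  invFun v := match v with
    | .s => .inl ()
    | .t => .inr (.inl ())
    | .c ℓ i => .inr (.inr (.inl (ℓ, i)))
    | .c' ℓ i => .inr (.inr (.inr (.inl (ℓ, i))))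
    | .f i => .inr (.inr (.inr (.inr i)))
  left_inv := by rintro (⟨⟩ | ⟨⟩ | ⟨ℓ, i⟩ | ⟨ℓ, i⟩ | i) <;> rfl
  right_inv := by rintro (_ | _ | ⟨ℓ, i⟩ | ⟨ℓ, i⟩ | i) <;> rfl

lemma sum_bnode {n m : ℕ} (g : BNode n m → ℤ) :
    ∑ v, g v = g .s + g .t + (∑ ℓ, ∑ i, g (.c ℓ i)) + (∑ ℓ, ∑ i, g (.c' ℓ i))
      + ∑ i, g (.f i) := by
  rw [← Fintype.sum_equiv (bEquiv n m) (fun y => g (bEquiv n m y)) g (fun _ => rfl)]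
  simp [Fintype.sum_sum_type, Fintype.sum_prod_type, bEquiv]
  ring

/-- Any flow of value k·n in the bribery network induces a legal post-bribery
(k,b)-ballot profile (voter ℓ gives candidate j exactly Σ_i f(c_{ℓi},c'_{ℓj})
points) in which every candidate receives at most K total points. -/
theorem bribery_flow_gives_legal_profile (n m k b K : ℕ)
    (x : Fin n → Fin m → ℕ) (hx : ∀ ℓ, (∑ i, x ℓ i) = k)
    (f : BNode n m → BNode n m → ℤ)
    (hf : IsFlow (cpc n m k b K x) f)
    (hval : (∑ v, f .s v) = (k * n : ℤ)) :
    (∀ ℓ j, 0 ≤ ∑ i, f (.c ℓ i) (.c' ℓ j)) ∧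
    (∀ ℓ j, (∑ i, f (.c ℓ i) (.c' ℓ j)) ≤ (b : ℤ)) ∧
    (∀ ℓ, (∑ j, ∑ i, f (.c ℓ i) (.c' ℓ j)) = (k : ℤ)) ∧
    (∀ j, (∑ ℓ, ∑ i, f (.c ℓ i) (.c' ℓ j)) ≤ (K : ℤ)) := by
  obtain ⟨hcap, hskew, hcons⟩ := hf
  -- edges with zero capacity in both directions carry no flow
  have hzero : ∀ u v, cpc n m k b K x u v = 0 → cpc n m k b K x v u = 0 → f u v = 0 := by
    intro u v h1 h2
    have a1 := hcap u v; have a2 := hcap v u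
    rw [h1] at a1; rw [h2] at a2
    have := hskew u v
    push_cast at a1 a2
    linarith
  -- total capacity out of the source
  have hcapsum : ∑ v, (cpc n m k b K x .s v : ℤ) = (k * n : ℤ) := by
    rw [sum_bnode (fun v => (cpc n m k b K x .s v : ℤ))]
    simp only [cpc, Nat.cast_zero, Finset.sum_const_zero, add_zero, zero_add]
    have : ∀ ℓ, ∑ i, (x ℓ i : ℤ) = (k : ℤ) := by
      intro ℓ; exact_mod_cast congrArg (Nat.cast : ℕ → ℤ) (hx ℓ)
    rw [Finset.sum_congr rfl fun ℓ _ => this ℓ]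
    simp [mul_comm]
  -- the source edges are saturated
  have hsat : ∀ v, f .s v = (cpc n m k b K x .s v : ℤ) := by
    have hle : ∀ v ∈ (univ : Finset (BNode n m)), f .s v ≤ (cpc n m k b K x .s v : ℤ) :=
      fun v _ => hcap .s v
    have := (Finset.sum_eq_sum_iff_of_le hle).1 (by rw [hval, hcapsum])
    exact fun v => this v (mem_univ v)
  -- conservation at c ℓ i : row sums equal x ℓ i
  have hrow : ∀ ℓ i, ∑ j, f (.c ℓ i) (.c' ℓ j) = (x ℓ i : ℤ) := by
    intro ℓ i
    have h0 := hcons (.c ℓ i) (by simp) (by simp)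
    rw [sum_bnode (fun v => f (.c ℓ i) v)] at h0
    have h1 : f (.c ℓ i) .s = -(x ℓ i : ℤ) := by
      rw [hskew, hsat]; simp [cpc]
    have h2 : f (.c ℓ i) .t = 0 := hzero _ _ rfl rfl
    have h3 : ∀ ℓ' i', f (.c ℓ i) (.c ℓ' i') = 0 := fun ℓ' i' => hzero _ _ rfl rfl
    have h5 : ∀ i', f (.c ℓ i) (.f i') = 0 := fun i' => hzero _ _ rfl rfl
    have h4 : ∀ ℓ' j, ℓ' ≠ ℓ → f (.c ℓ i) (.c' ℓ' j) = 0 := by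
      intro ℓ' j h
      apply hzero
      · simp [cpc, (Ne.symm h : ℓ ≠ ℓ')]
      · rfl
    have h6 : (∑ ℓ', ∑ j, f (.c ℓ i) (.c' ℓ' j)) = ∑ j, f (.c ℓ i) (.c' ℓ j) :=
      Finset.sum_eq_single_of_mem ℓ (mem_univ ℓ)
        (fun ℓ' _ hne => Finset.sum_eq_zero fun j _ => h4 ℓ' j hne)
    simp only [h1, h2, h3, h5, Finset.sum_const_zero, add_zero, h6] at h0
    linarith
  -- conservation at c' ℓ j : column sums equal flow into f_j
  have hcol : ∀ ℓ j, (∑ i, f (.c ℓ i) (.c' ℓ j)) = f (.c' ℓ j) (.f j) := by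
    intro ℓ j
    have h0 := hcons (.c' ℓ j) (by simp) (by simp)
    rw [sum_bnode (fun v => f (.c' ℓ j) v)] at h0
    have h1 : f (.c' ℓ j) .s = 0 := hzero _ _ rfl rfl
    have h2 : f (.c' ℓ j) .t = 0 := hzero _ _ rfl rfl
    have h3 : ∀ ℓ' i', f (.c' ℓ j) (.c' ℓ' i') = 0 := fun ℓ' i' => hzero _ _ rfl rfl
    have h4 : ∀ ℓ' i', ℓ' ≠ ℓ → f (.c' ℓ j) (.c ℓ' i') = 0 := by
      intro ℓ' i' h
      apply hzero
      · rfl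
      · simp [cpc, h]
    have h5 : (∑ ℓ', ∑ i', f (.c' ℓ j) (.c ℓ' i')) = -∑ i, f (.c ℓ i) (.c' ℓ j) := by
      rw [Finset.sum_eq_single_of_mem ℓ (mem_univ ℓ)
        (fun ℓ' _ hne => Finset.sum_eq_zero fun i' _ => h4 ℓ' i' hne)]
      rw [← Finset.sum_neg_distrib]
      exact Finset.sum_congr rfl fun i _ => hskew _ _
    have h6 : ∀ i', i' ≠ j → f (.c' ℓ j) (.f i') = 0 := by
      intro i' h
      apply hzero
      · simp [cpc, (Ne.symm h : j ≠ i')]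
      · rfl
    have h7 : (∑ i', f (.c' ℓ j) (.f i')) = f (.c' ℓ j) (.f j) :=
      Finset.sum_eq_single_of_mem j (mem_univ j) (fun i' _ hne => h6 i' hne)
    simp only [h1, h2, h3, Finset.sum_const_zero, add_zero, zero_add, h5, h7] at h0
    linarith
  have hynn : ∀ ℓ j, (0 : ℤ) ≤ f (.c' ℓ j) (.f j) := by
    intro ℓ j
    have a := hcap (.f j) (.c' ℓ j)
    have : cpc n m k b K x (.f j) (.c' ℓ j) = 0 := rfl
    rw [this] at a
    have := hskew (.c' ℓ j) (.f j)
    push_cast at a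
    linarith
  have hyb : ∀ ℓ j, f (.c' ℓ j) (.f j) ≤ (b : ℤ) := by
    intro ℓ j
    have a := hcap (.c' ℓ j) (.f j)
    simpa [cpc] using a
  -- conservation at f j
  have hfj : ∀ j, (∑ ℓ, f (.c' ℓ j) (.f j)) = f (.f j) .t := by
    intro j
    have h0 := hcons (.f j) (by simp) (by simp)
    rw [sum_bnode (fun v => f (.f j) v)] at h0
    have h1 : f (.f j) .s = 0 := hzero _ _ rfl rfl
    have h3 : ∀ ℓ' i', f (.f j) (.c ℓ' i') = 0 := fun ℓ' i' => hzero _ _ rfl rfl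
    have h5 : ∀ i', f (.f j) (.f i') = 0 := fun i' => hzero _ _ rfl rfl
    have h4 : ∀ ℓ i', i' ≠ j → f (.f j) (.c' ℓ i') = 0 := by
      intro ℓ i' h
      apply hzero
      · rfl
      · simp [cpc, h]
    have h6 : (∑ ℓ, ∑ i', f (.f j) (.c' ℓ i')) = -∑ ℓ, f (.c' ℓ j) (.f j) := by
      rw [← Finset.sum_neg_distrib]
      refine Finset.sum_congr rfl fun ℓ _ => ?_
      rw [Finset.sum_eq_single_of_mem j (mem_univ j) (fun i' _ hne => h4 ℓ i' hne)]
      exact hskew _ _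
    simp only [h1, h3, h5, Finset.sum_const_zero, add_zero, zero_add, h6] at h0
    linarith
  have hKt : ∀ j, f (.f j) .t ≤ (K : ℤ) := by
    intro j
    have a := hcap (.f j) .t
    simpa [cpc] using a
  refine ⟨?_, ?_, ?_, ?_⟩
  · intro ℓ j; rw [hcol]; exact hynn ℓ j
  · intro ℓ j; rw [hcol]; exact hyb ℓ j
  · intro ℓ
    rw [Finset.sum_comm]
    rw [Finset.sum_congr rfl fun i _ => hrow ℓ i]
    exact_mod_cast congrArg (Nat.cast : ℕ → ℤ) (hx ℓ)
  · intro j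
    calc (∑ ℓ, ∑ i, f (.c ℓ i) (.c' ℓ j)) = ∑ ℓ, f (.c' ℓ j) (.f j) :=
          Finset.sum_congr rfl fun ℓ _ => hcol ℓ j
      _ = f (.f j) .t := hfj j
      _ ≤ (K : ℤ) := hKt j
end
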